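/- Let R be a commutative ring of characteristic p. Define the mixed ring mix(R) = (R, R, id, fr) where fr is the Frobenius. Then mix(R) descends to a twisted ring (i.e., admits a twisted descent datum) if and only if R admits a ring automorphism ψ with ψ ∘ ψ = fr. In particular, if fr is not bijective on R, then mix(R) admits no twisted descent datum. -/

import Mathlib

/-!
A descent datum `(f₁, f₂)` on `(R, R, id, φ)` is determined by the automorphism `ψ = f₂`:
then `f₁ = ψ⁻¹`, and both intertwining conditions reduce to `ψ ∘ ψ = φ`. A map with a
square root in `Aut R` is a composite of two bijections, hence bijective.
-/

def IsTwistedDescentDatum {R₁ R₂ : Type*} [NonAssocSemiring R₁] [NonAssocSemiring R₂]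
    (φ₁ : R₁ → R₂) (φ₂ : R₂ → R₁) (f₁ : R₁ →+* R₂) (f₂ : R₂ →+* R₁) : Prop :=
  (∀ x, f₂ (f₁ x) = x) ∧ (∀ x, f₁ (f₂ x) = x) ∧
    (∀ x, f₁ (φ₂ x) = φ₁ (f₂ x)) ∧ ∀ x, f₂ (φ₁ x) = φ₂ (f₁ x)

theorem exists_isTwistedDescentDatum_id_iff {R : Type*} [NonAssocSemiring R] (φ : R → R) :
    (∃ f₁ f₂ : R →+* R, IsTwistedDescentDatum id φ f₁ f₂) ↔
      ∃ ψ : R ≃+* R, ∀ x, ψ (ψ x) = φ x := by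
  constructor
  · rintro ⟨f₁, f₂, h₂₁, h₁₂, -, hφ⟩
    refine ⟨RingEquiv.ofRingHom f₂ f₁ (RingHom.ext h₂₁) (RingHom.ext h₁₂), fun x => ?_⟩
    exact (hφ (f₂ x)).trans (congrArg φ (h₁₂ x))
  · rintro ⟨ψ, hψ⟩
    refine ⟨ψ.symm, ψ, ψ.apply_symm_apply, ψ.symm_apply_apply, fun x => ?_, fun x => ?_⟩
    · change ψ.symm (φ x) = ψ x
      rw [← hψ, ψ.symm_apply_apply]
    · change ψ x = φ (ψ.symm x)
      rw [← hψ, ψ.apply_symm_apply]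

theorem Function.Bijective.of_ringEquiv_sq {R : Type*} [Mul R] [Add R] {φ : R → R}
    (ψ : R ≃+* R) (hψ : ∀ x, ψ (ψ x) = φ x) : Function.Bijective φ := by
  rw [show φ = ψ ∘ ψ from funext fun x => (hψ x).symm]
  exact ψ.bijective.comp ψ.bijective

theorem stmt_16_general (p : ℕ) (R : Type*) [CommRing R] :
    ((∃ f₁ f₂ : R →+* R,
        (∀ x, f₂ (f₁ x) = x) ∧ (∀ x, f₁ (f₂ x) = x) ∧
        (∀ x, f₁ (x ^ p) = f₂ x) ∧ (∀ x, f₂ x = (f₁ x) ^ p)) ↔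
      (∃ ψ : R ≃+* R, ∀ x, ψ (ψ x) = x ^ p)) ∧
    (¬ Function.Bijective (fun x : R => x ^ p) →
      ¬ ∃ f₁ f₂ : R →+* R,
        (∀ x, f₂ (f₁ x) = x) ∧ (∀ x, f₁ (f₂ x) = x) ∧
        (∀ x, f₁ (x ^ p) = f₂ x) ∧ (∀ x, f₂ x = (f₁ x) ^ p)) := by
  have descent_iff := exists_isTwistedDescentDatum_id_iff (fun x : R => x ^ p)
  refine ⟨descent_iff, fun hfr hdatum => hfr ?_⟩
  obtain ⟨ψ, hψ⟩ := descent_iff.mp hdatum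
  exact .of_ringEquiv_sq ψ hψ

/-- The mixed ring `mix(R) = (R, R, id, fr)` admits a twisted descent datum if and
only if `R` admits a ring automorphism `ψ` with `ψ² = fr`; in particular, if the
Frobenius of `R` is not bijective, there is no twisted descent datum. -/
theorem stmt_16 (p : ℕ) [Fact p.Prime] (R : Type*) [CommRing R] [CharP R p] :
    ((∃ f₁ f₂ : R →+* R,
        (∀ x, f₂ (f₁ x) = x) ∧ (∀ x, f₁ (f₂ x) = x) ∧
        (∀ x, f₁ (x ^ p) = f₂ x) ∧ (∀ x, f₂ x = (f₁ x) ^ p)) ↔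
      (∃ ψ : R ≃+* R, ∀ x, ψ (ψ x) = x ^ p)) ∧
    (¬ Function.Bijective (fun x : R => x ^ p) →
      ¬ ∃ f₁ f₂ : R →+* R,
        (∀ x, f₂ (f₁ x) = x) ∧ (∀ x, f₁ (f₂ x) = x) ∧
        (∀ x, f₁ (x ^ p) = f₂ x) ∧ (∀ x, f₂ x = (f₁ x) ^ p)) :=
  stmt_16_general p R
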